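/- Vertex-wise perturbation stability of p-DTW: let (X,ρ) be a metric space, let p ∈ [1,∞), let τ ∈ X^m be a point sequence of complexity m ≥ 2, let c = (c₁,…,c_ℓ) and c̃ = (c̃₁,…,c̃_ℓ) be point sequences of the same complexity ℓ ≥ 2, and let η ≥ 0 satisfy ρ(c_j, c̃_j) ≤ η for every j ∈ [ℓ]. Then dtw_p(τ, c̃) ≤ dtw_p(τ, c) + (m+ℓ)^{1/p} · η. -/

import Mathlib

/-! Every warping `W` for `(τ, c)` is also a warping for `(τ, c̃)`. By the triangle
inequality each term `ρ(τ_i, c̃_j)` is at most `ρ(τ_i, c_j) + η`, and Minkowski's inequality in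
`ℓ^p` over the `|W| ≤ m + ℓ` pairs of `W` bounds the new cost by the old one plus `|W|^{1/p} η`. -/

open scoped BigOperators

/-- An `(m₁, m₂)`-warping (with 0-based indices): a sequence of index pairs starting at
`(0,0)`, ending at `(m₁-1, m₂-1)`, whose consecutive increments lie in
`{(0,1), (1,0), (1,1)}`. -/
def IsWarping (m₁ m₂ : ℕ) (W : List (ℕ × ℕ)) : Prop :=
  W ≠ [] ∧ W.head? = some (0, 0) ∧ W.getLast? = some (m₁ - 1, m₂ - 1) ∧
    ∀ k, k + 1 < W.length →
      W.getD (k + 1) (0, 0) = ((W.getD k (0, 0)).1, (W.getD k (0, 0)).2 + 1) ∨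
      W.getD (k + 1) (0, 0) = ((W.getD k (0, 0)).1 + 1, (W.getD k (0, 0)).2) ∨
      W.getD (k + 1) (0, 0) = ((W.getD k (0, 0)).1 + 1, (W.getD k (0, 0)).2 + 1)

/-- The cost `Σ_{(i,j) ∈ W} ρ(σ_i, τ_j)^p` of a warping `W`. -/
noncomputable def warpCost {X : Type*} [MetricSpace X] [Inhabited X]
    (p : ℝ) (σ τ : List X) (W : List (ℕ × ℕ)) : ℝ :=
  (W.map fun ij => dist (σ.getD ij.1 default) (τ.getD ij.2 default) ^ p).sum

/-- The `p`-dynamic time warping distance between two point sequences. -/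
noncomputable def dtw {X : Type*} [MetricSpace X] [Inhabited X] (p : ℝ) (σ τ : List X) : ℝ :=
  sInf { c : ℝ | ∃ W, IsWarping σ.length τ.length W ∧ c = warpCost p σ τ W ^ (1 / p) }

/-- `cost_p^q(T, c) = Σ_{τ ∈ T} dtw_p(c, τ)^q`. -/
noncomputable def dtwCost {X : Type*} [MetricSpace X] [Inhabited X]
    (p q : ℝ) (T : Finset (List X)) (c : List X) : ℝ :=
  ∑ τ ∈ T, dtw p c τ ^ q

/-- `σ` is a point sequence of complexity at most `ℓ`, i.e. `σ ∈ X^{≤ℓ}`. -/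
def SeqLE {X : Type*} (ℓ : ℕ) (σ : List X) : Prop := 2 ≤ σ.length ∧ σ.length ≤ ℓ

open Finset

namespace IsWarping

variable {m₁ m₂ : ℕ} {W : List (ℕ × ℕ)}

lemma le_fst_add_snd (h : IsWarping m₁ m₂ W) {k : ℕ} (hk : k < W.length) :
    k ≤ (W.getD k (0, 0)).1 + (W.getD k (0, 0)).2 := by
  induction k with
  | zero => exact Nat.zero_le _
  | succ k ih =>
    have := ih (by omega)
    rcases h.2.2.2 k hk with h' | h' | h' <;> rw [h'] <;> dsimp only <;> omega

lemma getD_length_sub_one (h : IsWarping m₁ m₂ W) :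
    W.getD (W.length - 1) (0, 0) = (m₁ - 1, m₂ - 1) := by
  rw [List.getD_eq_getElem?_getD, ← List.getLast?_eq_getElem?, h.2.2.1, Option.getD_some]

lemma length_le (h : IsWarping m₁ m₂ W) : W.length ≤ m₁ - 1 + (m₂ - 1) + 1 := by
  have hpos : 0 < W.length := List.length_pos_iff.2 h.1
  have := h.le_fst_add_snd (k := W.length - 1) (by omega)
  rw [h.getD_length_sub_one] at this
  omega

end IsWarping

lemma exists_isWarping (m₁ m₂ : ℕ) : ∃ W, IsWarping m₁ m₂ W := by
  -- the staircase that first advances in the first index, then in the second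
  set a := m₁ - 1
  set b := m₂ - 1
  refine ⟨(List.range (a + b + 1)).map fun k => (min k a, k - min k a), ?_, ?_, ?_, ?_⟩
  · simp
  · simp [List.head?_range]
  · rw [List.getLast?_eq_getElem?, List.getElem?_eq_getElem (by simp)]
    simp only [List.length_map, List.length_range, List.getElem_map, List.getElem_range,
      Option.some.injEq, Prod.mk.injEq]
    omega
  · intro k hk
    simp only [List.length_map, List.length_range] at hk
    rw [List.getD_eq_getElem _ _ (by simp; omega), List.getD_eq_getElem _ _ (by simp; omega)]
    simp only [List.getElem_map, List.getElem_range, Prod.mk.injEq]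
    omega

section Cost

variable {X : Type*} [MetricSpace X] [Inhabited X]

lemma warpCost_eq_sum (p : ℝ) (σ τ : List X) (W : List (ℕ × ℕ)) :
    warpCost p σ τ W =
      ∑ k : Fin W.length, dist (σ.getD W[k].1 default) (τ.getD W[k].2 default) ^ p :=
  (Fin.sum_univ_fun_getElem W _).symm

lemma warpCost_nonneg (p : ℝ) (σ τ : List X) (W : List (ℕ × ℕ)) : 0 ≤ warpCost p σ τ W :=
  List.sum_nonneg <| by
    simp only [List.mem_map]
    rintro _ ⟨ij, -, rfl⟩
    exact Real.rpow_nonneg dist_nonneg p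

lemma dtw_le_warpCost_rpow (p : ℝ) {σ τ : List X} {W : List (ℕ × ℕ)}
    (hW : IsWarping σ.length τ.length W) : dtw p σ τ ≤ warpCost p σ τ W ^ (1 / p) :=
  csInf_le ⟨0, by rintro _ ⟨W, -, rfl⟩; exact Real.rpow_nonneg (warpCost_nonneg p σ τ W) _⟩
    ⟨W, hW, rfl⟩

lemma le_dtw {p a : ℝ} {σ τ : List X}
    (h : ∀ W, IsWarping σ.length τ.length W → a ≤ warpCost p σ τ W ^ (1 / p)) :
    a ≤ dtw p σ τ := by
  obtain ⟨W₀, hW₀⟩ := exists_isWarping σ.length τ.length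
  exact le_csInf ⟨_, W₀, hW₀, rfl⟩ (by rintro _ ⟨W, hW, rfl⟩; exact h W hW)

lemma warpCost_rpow_le_of_dist_le {p η : ℝ} (hp : 1 ≤ p) (hη : 0 ≤ η) (σ : List X)
    {c c' : List X} (hcc' : ∀ j, dist (c.getD j default) (c'.getD j default) ≤ η)
    (W : List (ℕ × ℕ)) :
    warpCost p σ c' W ^ (1 / p) ≤ warpCost p σ c W ^ (1 / p) + (W.length : ℝ) ^ (1 / p) * η := by
  have hp₀ : 0 < p := by linarith
  set d : Fin W.length → ℝ := fun k => dist (σ.getD W[k].1 default) (c.getD W[k].2 default)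
  simp only [warpCost_eq_sum]
  calc (∑ k : Fin W.length, dist (σ.getD W[k].1 default) (c'.getD W[k].2 default) ^ p) ^ (1 / p)
      ≤ (∑ k, (d k + η) ^ p) ^ (1 / p) := by
        gcongr with k
        exact (dist_triangle _ _ _).trans (add_le_add_right (hcc' _) _)
    _ ≤ (∑ k, d k ^ p) ^ (1 / p) + (∑ _k : Fin W.length, η ^ p) ^ (1 / p) :=
        Real.Lp_add_le_of_nonneg _ hp (fun _ _ => dist_nonneg) (fun _ _ => hη)
    _ = (∑ k, d k ^ p) ^ (1 / p) + (W.length : ℝ) ^ (1 / p) * η := by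
        rw [sum_const, card_univ, Fintype.card_fin, nsmul_eq_mul,
          Real.mul_rpow (Nat.cast_nonneg _) (Real.rpow_nonneg hη _), one_div,
          Real.rpow_rpow_inv hη hp₀.ne']

end Cost

theorem dtw_vertexwise_perturbation_general {X : Type*} [MetricSpace X] [Inhabited X]
    (p : ℝ) (hp : 1 ≤ p)
    (τ c c' : List X)
    (hc : 2 ≤ c.length) (hlen : c'.length = c.length)
    (η : ℝ) (hη : 0 ≤ η)
    (hpert : ∀ j < c.length, dist (c.getD j default) (c'.getD j default) ≤ η) :
    dtw p τ c' ≤ dtw p τ c + ((τ.length + c.length : ℕ) : ℝ) ^ (1 / p) * η := by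
  have hpert_all : ∀ j, dist (c.getD j default) (c'.getD j default) ≤ η := by
    intro j
    by_cases hj : j < c.length
    · exact hpert j hj
    -- past the end both lists read `default`
    · simpa [List.getD_eq_default, hlen, not_lt.mp hj] using hη
  rw [← sub_le_iff_le_add]
  refine le_dtw fun W hW => sub_le_iff_le_add.2 ?_
  have hW_len : (W.length : ℝ) ≤ ((τ.length + c.length : ℕ) : ℝ) := by
    exact_mod_cast hW.length_le.trans (by omega)
  calc dtw p τ c' ≤ warpCost p τ c' W ^ (1 / p) := dtw_le_warpCost_rpow p (hlen ▸ hW)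
    _ ≤ warpCost p τ c W ^ (1 / p) + (W.length : ℝ) ^ (1 / p) * η :=
        warpCost_rpow_le_of_dist_le hp hη τ hpert_all W
    _ ≤ warpCost p τ c W ^ (1 / p) + ((τ.length + c.length : ℕ) : ℝ) ^ (1 / p) * η := by
        gcongr

/-- **Vertex-wise perturbation stability of p-DTW** (used in Lemma
`lemma:correctnessapproxscheme`): if `c` and `c̃` have the same complexity `ℓ` and
`ρ(c_j, c̃_j) ≤ η` for every `j`, then for any point sequence `τ` of complexity `m`,
`dtw_p(τ, c̃) ≤ dtw_p(τ, c) + (m+ℓ)^{1/p}·η`. -/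
theorem dtw_vertexwise_perturbation {X : Type*} [MetricSpace X] [Inhabited X]
    (p : ℝ) (hp : 1 ≤ p)
    (τ c c' : List X)
    (hτ : 2 ≤ τ.length) (hc : 2 ≤ c.length) (hlen : c'.length = c.length)
    (η : ℝ) (hη : 0 ≤ η)
    (hpert : ∀ j < c.length, dist (c.getD j default) (c'.getD j default) ≤ η) :
    dtw p τ c' ≤ dtw p τ c + ((τ.length + c.length : ℕ) : ℝ) ^ (1 / p) * η :=
  dtw_vertexwise_perturbation_general p hp τ c c' hc hlen η hη hpert
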